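/- Let χ be a bi-homomorphism on Π in the class X_fin (finite Kharchenko root system), n := |R^+(χ)|, and f : {1,...,n} → I a map such that the elements w_t := s^{χ_{f,1}}_{f(1)} ⋯ s^{χ₍f,t₎}_{f(t)} satisfy w_{y}(α_{f(y+1)}) ∈ R^+(χ) for all 1 ≤ y ≤ t-1. Then ℓ(w_t) = t, where ℓ(w) = |w(R^+(χ_{f,t})) ∩ (−Z≥0 Π)|. -/

import Mathlib

/-- `ℤΠ`, the free `ℤ`-module with basis `Π = {α_1,…,α_N}`. -/
abbrev Mz (N : ℕ) := Fin N →₀ ℤ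

/-- The simple "root" `α_i`, the `i`-th basis element of `ℤΠ`. -/
noncomputable def alphav {N : ℕ} (i : Fin N) : Mz N := Finsupp.single i 1

/-- A bi-homomorphism `χ : ℤΠ × ℤΠ → ℂ*`. -/
def IsBihom {N : ℕ} (χ : Mz N → Mz N → ℂˣ) : Prop :=
  (∀ a b c : Mz N, χ a (b + c) = χ a b * χ a c) ∧
  (∀ a b c : Mz N, χ (a + b) c = χ a c * χ b c)

/-- `(m)_t := 1 + t + ⋯ + t^{m-1}`. -/
noncomputable def qnum (m : ℕ) (t : ℂ) : ℂ := ∑ j ∈ Finset.range m, t ^ j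

/-- `(m)_t! := ∏_{j=1}^m (j)_t`. -/
noncomputable def qfact (m : ℕ) (t : ℂ) : ℂ := ∏ j ∈ Finset.range m, qnum (j + 1) t

/-- `(m; t₁, t₂)! := ∏_{j=1}^m (1 - t₁^{j-1} t₂)`. -/
noncomputable def tfact (m : ℕ) (t₁ t₂ : ℂ) : ℂ := ∏ j ∈ Finset.range m, (1 - t₁ ^ j * t₂)

/-- The Cartan entry `c` (off-diagonal part) attached to `q = q_{ii}` and `r = q_{ij}q_{ji}`:
`⊥` (i.e. `-∞`) if `(m)_q!(m;q,r)! ≠ 0` for all `m`, and otherwise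
`-Max{m ∈ ℤ≥0 | (m)_q!(m;q,r)! ≠ 0}`. -/
noncomputable def cEntry (q r : ℂ) : WithBot ℤ :=
  letI := Classical.propDecidable
  if ∀ m : ℕ, qfact m q * tfact m q r ≠ 0 then ⊥
  else ((-((sSup {m : ℕ | qfact m q * tfact m q r ≠ 0} : ℕ) : ℤ) : ℤ) : WithBot ℤ)

/-- The generalized Cartan matrix `c^χ_{ij}` of a bi-homomorphism `χ`. -/
noncomputable def cMat {N : ℕ} (χ : Mz N → Mz N → ℂˣ) (i j : Fin N) : WithBot ℤ :=
  if i = j then 2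
  else cEntry (χ (alphav i) (alphav i))
    ((χ (alphav i) (alphav j) : ℂ) * (χ (alphav j) (alphav i) : ℂ))

/-- `c^χ_{ij}` as an integer (junk value `0` in the `-∞` case). -/
noncomputable def cInt {N : ℕ} (χ : Mz N → Mz N → ℂˣ) (i j : Fin N) : ℤ :=
  (cMat χ i j).unbotD 0

/-- The reflection `s^χ_i ∈ Aut_ℤ(ℤΠ)`, `s^χ_i(α_j) = α_j - c^χ_{ij} α_i`,
extended `ℤ`-linearly. -/
noncomputable def sMap {N : ℕ} (χ : Mz N → Mz N → ℂˣ) (i : Fin N) (v : Mz N) : Mz N :=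
  v - (v.sum fun j n => n * cInt χ i j) • alphav i

/-- The Lusztig twist `i★χ`, `(i★χ)(α,β) := χ(s^χ_i α, s^χ_i β)`. -/
noncomputable def starB {N : ℕ} (i : Fin N) (χ : Mz N → Mz N → ℂˣ) :
    Mz N → Mz N → ℂˣ :=
  fun a b => χ (sMap χ i a) (sMap χ i b)

/-- χ' is obtained from χ by a finite sequence of Lusztig twists (χ' ∼ χ). -/
def Reachable {N : ℕ} (χ χ' : Mz N → Mz N → ℂˣ) : Prop :=
  ∃ l : List (Fin N), χ' = l.foldl (fun ψ i => starB i ψ) χ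

/-- The iterated twists χ_{f,t}: χ_{f,0} = χ and χ_{f,t} = f(t)★χ_{f,t-1}. -/
noncomputable def chif {N : ℕ} (χ : Mz N → Mz N → ℂˣ) (f : ℕ → Fin N) :
    ℕ → (Mz N → Mz N → ℂˣ)
  | 0 => χ
  | (t + 1) => starB (f (t + 1)) (chif χ f t)

/-- The partial products w_t = s^{χ_{f,1}}_{f(1)} ∘ ⋯ ∘ s^{χ_{f,t}}_{f(t)}. -/
noncomputable def wt {N : ℕ} (χ : Mz N → Mz N → ℂˣ) (f : ℕ → Fin N) :
    ℕ → (Mz N → Mz N)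
  | 0 => id
  | (t + 1) => wt χ f t ∘ sMap (chif χ f (t + 1)) (f (t + 1))

/-- The nonzero elements of ℤ≥0 Π. -/
def PosCone (N : ℕ) : Set (Mz N) := {v | v ≠ 0 ∧ ∀ k, 0 ≤ v k}

/-- The elements of -ℤ≥0 Π. -/
def NegCone (N : ℕ) : Set (Mz N) := {v | ∀ k, v k ≤ 0}

/-! Write `w_{u+1} = w_u s_i` with `i = f(u+1)`. Since `s_i^{χ'}` maps `R⁺(i★χ')` onto
`(R⁺(χ') ∖ {α_i}) ∪ {-α_i}`, the set `w_{u+1}(R⁺(χ_{f,u+1}))` is `w_u(R⁺(χ_{f,u}))` with `w_u(α_i)`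
replaced by `-w_u(α_i)`. When `w_u(α_i)` is positive, this adds exactly one element to the part
lying in `-ℤ≥0Π`, so by induction that part has exactly `u` elements. -/

section Reflection

variable {N : ℕ} (χ : Mz N → Mz N → ℂˣ) (i : Fin N)

lemma sMap_eq_sub_linearCombination (v : Mz N) :
    sMap χ i v = v - Finsupp.linearCombination ℤ (cInt χ i) v • alphav i := by
  simp [sMap, Finsupp.linearCombination_apply]

lemma cInt_self : cInt χ i i = 2 := by
  simp [cInt, cMat]

lemma linearCombination_cInt_alphav :
    Finsupp.linearCombination ℤ (cInt χ i) (alphav i) = 2 := by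
  simp [alphav, Finsupp.linearCombination_single, cInt_self]

lemma sMap_involutive : Function.Involutive (sMap χ i) := by
  intro v
  simp only [sMap_eq_sub_linearCombination, map_sub, map_smul, linearCombination_cInt_alphav,
    smul_eq_mul]
  module

lemma sMap_alphav : sMap χ i (alphav i) = -alphav i := by
  rw [sMap_eq_sub_linearCombination, linearCombination_cInt_alphav]
  module

lemma sMap_neg (v : Mz N) : sMap χ i (-v) = -sMap χ i v := by
  simp only [sMap_eq_sub_linearCombination, map_neg]
  module

end Reflection

section Word

variable {N : ℕ} (χ : Mz N → Mz N → ℂˣ) (f : ℕ → Fin N)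

lemma wt_neg (t : ℕ) (v : Mz N) : wt χ f t (-v) = -wt χ f t v := by
  induction t generalizing v with
  | zero => rfl
  | succ t ih => simp only [wt, Function.comp_apply, sMap_neg, ih]

lemma wt_injective (t : ℕ) : Function.Injective (wt χ f t) := by
  induction t with
  | zero => exact Function.injective_id
  | succ t ih => exact ih.comp (sMap_involutive _ _).injective

lemma Reachable.refl : Reachable χ χ := ⟨[], rfl⟩

lemma Reachable.starB {χ' : Mz N → Mz N → ℂˣ} (h : Reachable χ χ') (i : Fin N) :
    Reachable χ (starB i χ') := by
  obtain ⟨l, rfl⟩ := h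
  exact ⟨l ++ [i], by simp⟩

lemma reachable_chif (t : ℕ) : Reachable χ (chif χ f t) := by
  induction t with
  | zero => exact Reachable.refl χ
  | succ t ih => exact ih.starB χ _

end Word

section Cone

variable {N : ℕ} {v : Mz N}

lemma notMem_NegCone_of_mem_PosCone (h : v ∈ PosCone N) : v ∉ NegCone N :=
  fun hneg => h.1 <| Finsupp.ext fun k => le_antisymm (hneg k) (h.2 k)

lemma neg_mem_NegCone_of_mem_PosCone (h : v ∈ PosCone N) : -v ∈ NegCone N :=
  fun k => by simpa using h.2 k

lemma alphav_mem_PosCone (i : Fin N) : alphav i ∈ PosCone N := by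
  refine ⟨by simp [alphav], fun k => ?_⟩
  simp only [alphav, Finsupp.single_apply]
  split_ifs <;> omega

lemma neg_alphav_notMem_PosCone (i : Fin N) : -alphav i ∉ PosCone N := fun h => by
  simpa [alphav] using h.2 i

end Cone

section RootSystem

variable {N : ℕ} {χ' : Mz N → Mz N → ℂˣ} {i : Fin N} {R R' : Set (Mz N)}

lemma image_sMap_of_reflect (hR' : alphav i ∈ R')
    (hrefl : sMap χ' i '' (R \ {alphav i}) = R' \ {alphav i}) :
    sMap χ' i '' R' = insert (-alphav i) (R \ {alphav i}) := by
  rw [← Set.insert_eq_of_mem hR', ← Set.insert_sdiff_singleton, Set.image_insert_eq,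
    sMap_alphav, ← hrefl, (sMap_involutive χ' i).leftInverse.image_image]

variable {χ : Mz N → Mz N → ℂˣ} {Rp : (Mz N → Mz N → ℂˣ) → Set (Mz N)} {f : ℕ → Fin N}

lemma image_wt_succ
    (hRsimple : ∀ χ', Reachable χ χ' → ∀ i : Fin N, alphav i ∈ Rp χ')
    (hRrefl : ∀ χ', Reachable χ χ' → ∀ i : Fin N,
      sMap χ' i '' (Rp χ' \ {alphav i}) = Rp (starB i χ') \ {alphav i})
    (hstar : ∀ χ', Reachable χ χ' → ∀ i : Fin N, sMap (starB i χ') i = sMap χ' i) (u : ℕ) :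
    wt χ f (u + 1) '' Rp (chif χ f (u + 1)) =
      insert (-wt χ f u (alphav (f (u + 1))))
        (wt χ f u '' Rp (chif χ f u) \ {wt χ f u (alphav (f (u + 1)))}) := by
  have hreach := reachable_chif χ f u
  rw [wt, Set.image_comp, chif, hstar _ hreach,
    image_sMap_of_reflect (hRsimple _ (hreach.starB χ _) _) (hRrefl _ hreach _),
    Set.image_insert_eq, wt_neg, Set.image_sdiff (wt_injective χ f u), Set.image_singleton]

lemma inter_NegCone_wt_succ
    (hRsimple : ∀ χ', Reachable χ χ' → ∀ i : Fin N, alphav i ∈ Rp χ')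
    (hRrefl : ∀ χ', Reachable χ χ' → ∀ i : Fin N,
      sMap χ' i '' (Rp χ' \ {alphav i}) = Rp (starB i χ') \ {alphav i})
    (hstar : ∀ χ', Reachable χ χ' → ∀ i : Fin N, sMap (starB i χ') i = sMap χ' i) (u : ℕ)
    (hpos : wt χ f u (alphav (f (u + 1))) ∈ PosCone N) :
    wt χ f (u + 1) '' Rp (chif χ f (u + 1)) ∩ NegCone N =
      insert (-wt χ f u (alphav (f (u + 1)))) (wt χ f u '' Rp (chif χ f u) ∩ NegCone N) := by
  rw [image_wt_succ hRsimple hRrefl hstar, Set.insert_inter_of_mem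
    (neg_mem_NegCone_of_mem_PosCone hpos), ← Set.inter_sdiff_right_comm,
    Set.sdiff_singleton_eq_self fun h => notMem_NegCone_of_mem_PosCone hpos h.2]

lemma neg_wt_alphav_notMem_image (hR : R ⊆ PosCone N) (u : ℕ) (i : Fin N) :
    -wt χ f u (alphav i) ∉ wt χ f u '' R := by
  rintro ⟨β, hβ, hβeq⟩
  rw [← wt_neg, (wt_injective χ f u).eq_iff] at hβeq
  exact neg_alphav_notMem_PosCone i (hβeq ▸ hR hβ)

lemma encard_inter_NegCone_wt
    (hRsub : ∀ χ', Reachable χ χ' → Rp χ' ⊆ PosCone N)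
    (hRsimple : ∀ χ', Reachable χ χ' → ∀ i : Fin N, alphav i ∈ Rp χ')
    (hRrefl : ∀ χ', Reachable χ χ' → ∀ i : Fin N,
      sMap χ' i '' (Rp χ' \ {alphav i}) = Rp (starB i χ') \ {alphav i})
    (hstar : ∀ χ', Reachable χ χ' → ∀ i : Fin N, sMap (starB i χ') i = sMap χ' i) (u : ℕ)
    (hpos : ∀ y < u, wt χ f y (alphav (f (y + 1))) ∈ PosCone N) :
    (wt χ f u '' Rp (chif χ f u) ∩ NegCone N).encard = u := by
  induction u with
  | zero =>
    suffices Rp χ ∩ NegCone N = ∅ by simpa [wt, chif]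
    exact Set.eq_empty_of_forall_notMem fun v hv =>
      notMem_NegCone_of_mem_PosCone (hRsub χ (Reachable.refl χ) hv.1) hv.2
  | succ u ih =>
    rw [inter_NegCone_wt_succ hRsimple hRrefl hstar u (hpos u u.lt_succ_self),
      Set.encard_insert_of_notMem fun h => neg_wt_alphav_notMem_image
        (hRsub _ (reachable_chif χ f u)) u _ h.1,
      ih fun y hy => hpos y (hy.trans u.lt_succ_self)]
    rfl

end RootSystem

theorem length_of_partial_word_general {N : ℕ} (χ : Mz N → Mz N → ℂˣ)
    (Rp : (Mz N → Mz N → ℂˣ) → Set (Mz N))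
    (hRsub : ∀ χ', Reachable χ χ' → Rp χ' ⊆ PosCone N)
    (hRsimple : ∀ χ', Reachable χ χ' → ∀ i : Fin N, alphav i ∈ Rp χ')
    (hRrefl : ∀ χ', Reachable χ χ' → ∀ i : Fin N,
      sMap χ' i '' (Rp χ' \ {alphav i}) = Rp (starB i χ') \ {alphav i})
    (hstar : ∀ χ', Reachable χ χ' → ∀ i : Fin N,
      starB i (starB i χ') = χ' ∧ sMap (starB i χ') i = sMap χ' i)
    (f : ℕ → Fin N) (t : ℕ)
    (hpos : ∀ y : ℕ, 1 ≤ y → y ≤ t - 1 → wt χ f y (alphav (f (y + 1))) ∈ Rp χ) :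
    ((wt χ f t '' Rp (chif χ f t)) ∩ NegCone N).ncard = t := by
  have hpos' : ∀ y < t, wt χ f y (alphav (f (y + 1))) ∈ PosCone N := by
    rintro (_ | y) hy
    · exact alphav_mem_PosCone _
    · exact hRsub χ (Reachable.refl χ) (hpos _ (by omega) (by omega))
  rw [Set.ncard_def, encard_inter_NegCone_wt hRsub hRsimple hRrefl
    (fun χ' h i => (hstar χ' h i).2) t hpos', ENat.toNat_natCast]

/-- Let χ be of finite type (finite Kharchenko positive root system R⁺), n = |R⁺(χ)|,
and f a word such that w_y(α_{f(y+1)}) ∈ R⁺(χ) for 1 ≤ y ≤ t-1. Then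
ℓ(w_t) := |w_t(R⁺(χ_{f,t})) ∩ (-ℤ≥0Π)| = t. The hypotheses record the standard
properties of Kharchenko's root systems along the Weyl groupoid. -/
theorem length_of_partial_word {N : ℕ} (χ : Mz N → Mz N → ℂˣ) (hχ : IsBihom χ)
    (Rp : (Mz N → Mz N → ℂˣ) → Set (Mz N))
    (hRfin : (Rp χ).Finite)
    (hRsub : ∀ χ', Reachable χ χ' → Rp χ' ⊆ PosCone N)
    (hRsimple : ∀ χ', Reachable χ χ' → ∀ i : Fin N, alphav i ∈ Rp χ')
    (hRrefl : ∀ χ', Reachable χ χ' → ∀ i : Fin N,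
      sMap χ' i '' (Rp χ' \ {alphav i}) = Rp (starB i χ') \ {alphav i})
    (hstar : ∀ χ', Reachable χ χ' → ∀ i : Fin N,
      starB i (starB i χ') = χ' ∧ sMap (starB i χ') i = sMap χ' i)
    (f : ℕ → Fin N) (t : ℕ) (ht1 : 1 ≤ t) (ht2 : t ≤ (Rp χ).ncard)
    (hpos : ∀ y : ℕ, 1 ≤ y → y ≤ t - 1 → wt χ f y (alphav (f (y + 1))) ∈ Rp χ) :
    ((wt χ f t '' Rp (chif χ f t)) ∩ NegCone N).ncard = t :=
  length_of_partial_word_general χ Rp hRsub hRsimple hRrefl hstar f t hpos
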